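/- arXiv:1706.09236 — 2 statements merged into one kernel-verified Lean document; each statement's English description precedes it below -/
import Mathlib

section
/- Let f₁,…,f_m be polynomials over ℝ in d variables and suppose (p₁,…,p_m) is a positive vertex cluster with respect to n ∈ ℝ^d, i.e., each p_i lies in the positive frame of f_i (coefficient (f_i)_{p_i} > 0) and is a vertex of the Newton polytope of f_i with respect to the common vector n. Then there exists a₀ > 0 such that for all a ≥ a₀: f_i(a^n) > 0 for all i = 1,…,m. In particular the system f₁ > 0 ∧ … ∧ f_m > 0 has a solution with all coordinates positive. -/
/-!
Along the curve `a ↦ a ^ n` every monomial `x ^ q` becomes the real power `a ^ ⟪n, q⟫`. Dividing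
`f_i(a ^ n)` by the power of its vertex term `p_i`, all other terms carry a negative exponent and
vanish as `a → ∞`, so the quotient tends to the positive coefficient of `p_i`. Finitely many
polynomials are then positive simultaneously for large `a`.
-/

open Filter Topology

lemma Real.prod_rpow_pow_eq_rpow_sum {ι : Type*} [Fintype ι] (n : ι → ℝ) (q : ι → ℕ) {a : ℝ}
    (ha : 0 < a) : ∏ j, (a ^ n j) ^ q j = a ^ ∑ j, n j * (q j : ℝ) := by
  rw [Real.rpow_sum_of_pos ha]
  refine Finset.prod_congr rfl fun j _ => ?_
  rw [Real.rpow_mul ha.le, Real.rpow_natCast]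

section DominantExponent

variable {ι : Type*} {s : Finset ι} (c : ι → ℝ) {e : ι → ℝ} {p : ι}

lemma tendsto_sum_mul_rpow_sub_of_forall_lt (hp : p ∈ s)
    (hlt : ∀ q ∈ s, q ≠ p → e q < e p) :
    Tendsto (fun a : ℝ => ∑ q ∈ s, c q * a ^ (e q - e p)) atTop (𝓝 (c p)) := by
  classical
  simp_rw [← Finset.add_sum_erase s _ hp, sub_self, Real.rpow_zero, mul_one]
  have hrest : Tendsto (fun a : ℝ => ∑ q ∈ s.erase p, c q * a ^ (e q - e p)) atTop (𝓝 0) := by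
    rw [← Finset.sum_const_zero (s := s.erase p)]
    refine tendsto_finsetSum _ fun q hq => ?_
    obtain ⟨hqp, hqs⟩ := Finset.mem_erase.mp hq
    have hgap : 0 < e p - e q := sub_pos.mpr (hlt q hqs hqp)
    simpa [neg_sub] using (tendsto_rpow_neg_atTop hgap).const_mul (c q)
  simpa using tendsto_const_nhds.add hrest

lemma eventually_pos_sum_mul_rpow_of_forall_lt (hp : p ∈ s) (hcp : 0 < c p)
    (hlt : ∀ q ∈ s, q ≠ p → e q < e p) :
    ∀ᶠ a : ℝ in atTop, 0 < ∑ q ∈ s, c q * a ^ e q := by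
  filter_upwards [(tendsto_sum_mul_rpow_sub_of_forall_lt c hp hlt).eventually
    (eventually_gt_nhds hcp), eventually_gt_atTop 0] with a hquot ha
  have hfactor : ∀ q ∈ s, c q * a ^ e q = a ^ e p * (c q * a ^ (e q - e p)) := fun q _ => by
    rw [Real.rpow_sub ha]
    field_simp
  rw [Finset.sum_congr rfl hfactor, ← Finset.mul_sum]
  exact mul_pos (Real.rpow_pos_of_pos ha _) hquot

end DominantExponent

theorem positive_vertex_cluster_sat_general {d m : ℕ}
    (F : Fin m → Finset (Fin d → ℕ)) (coef : Fin m → (Fin d → ℕ) → ℝ)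
    (p : Fin m → (Fin d → ℕ)) (hp : ∀ i, p i ∈ F i)
    (hppos : ∀ i, 0 < coef i (p i)) (n : Fin d → ℝ)
    (hvert : ∀ i, ∀ q ∈ F i, q ≠ p i →
      ∑ j, n j * (p i j : ℝ) > ∑ j, n j * (q j : ℝ)) :
    (∃ a₀ : ℝ, 0 < a₀ ∧ ∀ a : ℝ, a₀ ≤ a → ∀ i : Fin m,
      0 < ∑ q ∈ F i, coef i q * ∏ j, (a ^ n j) ^ q j) ∧
    (∃ x : Fin d → ℝ, (∀ j, 0 < x j) ∧
      ∀ i : Fin m, 0 < ∑ q ∈ F i, coef i q * ∏ j, x j ^ q j) := by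
  have hlarge : ∀ᶠ a : ℝ in atTop, ∀ i : Fin m,
      0 < ∑ q ∈ F i, coef i q * ∏ j, (a ^ n j) ^ q j := by
    rw [eventually_all]
    intro i
    filter_upwards [eventually_pos_sum_mul_rpow_of_forall_lt (coef i) (hp i) (hppos i) (hvert i),
      eventually_gt_atTop 0] with a hpos ha
    simpa only [Real.prod_rpow_pow_eq_rpow_sum n _ ha] using hpos
  obtain ⟨a₀, ha₀⟩ := (hlarge.and (eventually_gt_atTop 0)).exists_forall_of_atTop
  obtain ⟨hpos₀, ha₀_pos⟩ := ha₀ a₀ le_rfl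
  exact ⟨⟨a₀, ha₀_pos, fun a ha => (ha₀ a ha).1⟩, fun j => a₀ ^ n j,
    fun j => Real.rpow_pos_of_pos ha₀_pos _, hpos₀⟩

/-- A positive vertex cluster w.r.t. n yields a₀ > 0 with
f_i(a^n) > 0 for all a ≥ a₀ and all i; in particular the system f₁ > 0 ∧ … ∧ f_m > 0
has a solution with all coordinates positive. -/
theorem positive_vertex_cluster_sat {d m : ℕ}
    (F : Fin m → Finset (Fin d → ℕ)) (coef : Fin m → (Fin d → ℕ) → ℝ)
    (hcoef : ∀ i, ∀ q ∈ F i, coef i q ≠ 0)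
    (p : Fin m → (Fin d → ℕ)) (hp : ∀ i, p i ∈ F i)
    (hppos : ∀ i, 0 < coef i (p i)) (n : Fin d → ℝ)
    (hvert : ∀ i, ∀ q ∈ F i, q ≠ p i →
      ∑ j, n j * (p i j : ℝ) > ∑ j, n j * (q j : ℝ)) :
    (∃ a₀ : ℝ, 0 < a₀ ∧ ∀ a : ℝ, a₀ ≤ a → ∀ i : Fin m,
      0 < ∑ q ∈ F i, coef i q * ∏ j, (a ^ n j) ^ q j) ∧
    (∃ x : Fin d → ℝ, (∀ j, 0 < x j) ∧
      ∀ i : Fin m, 0 < ∑ q ∈ F i, coef i q * ∏ j, x j ^ q j) :=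
  positive_vertex_cluster_sat_general F coef p hp hppos n hvert
end

section
/- Let f ∈ ℝ[x₁,…,x_d] and define Π(f) = {r ∈ (0,∞)^d : f(r) > 0}. If p ∈ frame⁺(f) is a vertex of the Newton polytope of f with respect to n ∈ ℝ^d, then either Π(f) is unbounded, or the closure of Π(f) contains the origin 0 ∈ ℝ^d. -/
/-!
Along the monomial curve `a ↦ a ^ n = (a ^ n₁, …, a ^ n_d)` the monomial `x ^ q` equals
`a ^ ⟨n, q⟩`, so the term of the vertex `p` dominates all others and `f` is eventually positive
on the curve. If some `nᵢ > 0` the curve escapes to infinity inside `Π(f)`. Otherwise, since being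
the strict maximiser of `⟨m, ·⟩` on `F` is an open condition in `m`, we may replace `n` by a
direction with all coordinates negative, and then the curve tends to `0` inside `Π(f)`.
-/

open Filter Topology

variable {ι : Type*}

def IsNewtonVertex [Fintype ι] (F : Finset (ι → ℕ)) (n : ι → ℝ) (p : ι → ℕ) : Prop :=
  ∀ q ∈ F, q ≠ p → ∑ i, n i * (q i : ℝ) < ∑ i, n i * (p i : ℝ)

def positivitySet [Fintype ι] (F : Finset (ι → ℕ)) (coef : (ι → ℕ) → ℝ) : Set (ι → ℝ) :=
  {x | (∀ i, 0 < x i) ∧ 0 < ∑ q ∈ F, coef q * ∏ i, x i ^ q i}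

lemma isOpen_setOf_isNewtonVertex [Fintype ι] (F : Finset (ι → ℕ)) (p : ι → ℕ) :
    IsOpen {n : ι → ℝ | IsNewtonVertex F n p} := by
  simp only [IsNewtonVertex, Set.ofPred_forall]
  refine isOpen_biInter_finset fun q _ => isOpen_iInter_of_finite fun _ => ?_
  exact isOpen_lt (by fun_prop) (by fun_prop)

lemma IsNewtonVertex.exists_forall_neg [Fintype ι] {F : Finset (ι → ℕ)} {n : ι → ℝ} {p : ι → ℕ}
    (hvert : IsNewtonVertex F n p) (hn : ∀ i, n i ≤ 0) :
    ∃ m : ι → ℝ, (∀ i, m i < 0) ∧ IsNewtonVertex F m p := by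
  have hshift : Tendsto (fun ε : ℝ => n - fun _ => ε) (𝓝[>] 0) (𝓝 n) := by
    have : Continuous fun ε : ℝ => n - fun _ => ε := by fun_prop
    exact (this.tendsto' 0 n (by simp [Pi.zero_def])).mono_left nhdsWithin_le_nhds
  obtain ⟨ε, hε, hvertε⟩ := (eventually_mem_nhdsWithin.and
    (hshift.eventually ((isOpen_setOf_isNewtonVertex F p).mem_nhds hvert))).exists
  exact ⟨n - fun _ => ε, fun i => by simp only [Pi.sub_apply]; linarith [hn i, hε.out], hvertε⟩

lemma eventually_pos_sum_mul_rpow {κ : Type*} (F : Finset κ) (coef c : κ → ℝ) {p : κ}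
    (hp : p ∈ F) (hpos : 0 < coef p) (hmax : ∀ q ∈ F, q ≠ p → c q < c p) :
    ∀ᶠ a : ℝ in atTop, 0 < ∑ q ∈ F, coef q * a ^ c q := by
  classical
  have hterm : ∀ q ∈ F, Tendsto (fun a : ℝ => coef q * a ^ (c q - c p)) atTop
      (𝓝 (if q = p then coef p else 0)) := by
    intro q hq
    by_cases hqp : q = p
    · subst hqp
      simp only [sub_self, Real.rpow_zero, mul_one]
      exact tendsto_const_nhds
    · have hdecay := (tendsto_rpow_neg_atTop (sub_pos.mpr (hmax q hq hqp))).const_mul (coef q)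
      simp only [neg_sub, mul_zero] at hdecay
      simpa only [if_neg hqp] using hdecay
  have hlim := tendsto_finsetSum F hterm
  rw [Finset.sum_ite_eq' F p, if_pos hp] at hlim
  filter_upwards [hlim.eventually (eventually_gt_nhds hpos), eventually_gt_atTop 0]
    with a hnormalized ha
  have hfactor : ∑ q ∈ F, coef q * a ^ c q =
      (∑ q ∈ F, coef q * a ^ (c q - c p)) * a ^ c p := by
    rw [Finset.sum_mul]
    refine Finset.sum_congr rfl fun q _ => ?_
    rw [mul_assoc, ← Real.rpow_add ha, sub_add_cancel]
  rw [hfactor]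
  exact mul_pos hnormalized (Real.rpow_pos_of_pos ha _)

lemma prod_rpow_pow [Fintype ι] {a : ℝ} (ha : 0 < a) (n : ι → ℝ) (q : ι → ℕ) :
    ∏ i, (a ^ n i) ^ q i = a ^ ∑ i, n i * (q i : ℝ) := by
  rw [Real.rpow_sum_of_pos ha]
  refine Finset.prod_congr rfl fun i _ => ?_
  rw [← Real.rpow_natCast, ← Real.rpow_mul ha.le]

lemma IsNewtonVertex.eventually_mem_positivitySet [Fintype ι] {F : Finset (ι → ℕ)}
    {coef : (ι → ℕ) → ℝ} {n : ι → ℝ} {p : ι → ℕ} (hvert : IsNewtonVertex F n p)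
    (hp : p ∈ F) (hpos : 0 < coef p) :
    ∀ᶠ a : ℝ in atTop, (fun i => a ^ n i) ∈ positivitySet F coef := by
  filter_upwards [eventually_pos_sum_mul_rpow F coef _ hp hpos hvert, eventually_gt_atTop 0]
    with a hsum ha
  refine ⟨fun i => Real.rpow_pos_of_pos ha _, ?_⟩
  simpa only [prod_rpow_pow ha] using hsum

lemma tendsto_rpow_cobounded [Fintype ι] {n : ι → ℝ} {i : ι} (hi : 0 < n i) :
    Tendsto (fun a : ℝ => fun j => a ^ n j) atTop (Bornology.cobounded (ι → ℝ)) := by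
  rw [← tendsto_norm_atTop_iff_cobounded]
  refine tendsto_atTop_mono (fun a => ?_) (tendsto_rpow_atTop hi)
  exact (Real.le_norm_self _).trans (norm_le_pi_norm (fun j => a ^ n j) i)

lemma tendsto_rpow_nhds_zero {n : ι → ℝ} (hn : ∀ i, n i < 0) :
    Tendsto (fun a : ℝ => fun j => a ^ n j) atTop (𝓝 0) := by
  refine tendsto_pi_nhds.mpr fun j => ?_
  simpa using tendsto_rpow_neg_atTop (neg_pos.mpr (hn j))

lemma not_isBounded_of_tendsto_cobounded {α β : Type*} [Bornology β] {l : Filter α} [l.NeBot]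
    {γ : α → β} {s : Set β} (hγ : Tendsto γ l (Bornology.cobounded β))
    (hmem : ∀ᶠ a in l, γ a ∈ s) : ¬ Bornology.IsBounded s := fun hs =>
  (hmem.and (hγ hs)).exists.elim fun _ h => h.2 h.1

theorem subtropical_necessary_condition_general {d : ℕ}
    (F : Finset (Fin d → ℕ)) (coef : (Fin d → ℕ) → ℝ)
    (p : Fin d → ℕ) (hp : p ∈ F) (hppos : 0 < coef p) (n : Fin d → ℝ)
    (hvert : ∀ q ∈ F, q ≠ p →
      ∑ i, n i * (p i : ℝ) > ∑ i, n i * (q i : ℝ)) :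
    ¬ Bornology.IsBounded
        {x : Fin d → ℝ | (∀ i, 0 < x i) ∧ 0 < ∑ q ∈ F, coef q * ∏ i, x i ^ q i} ∨
    (0 : Fin d → ℝ) ∈ closure
        {x : Fin d → ℝ | (∀ i, 0 < x i) ∧ 0 < ∑ q ∈ F, coef q * ∏ i, x i ^ q i} := by
  change ¬ Bornology.IsBounded (positivitySet F coef) ∨ 0 ∈ closure (positivitySet F coef)
  by_cases hn : ∃ i, 0 < n i
  · obtain ⟨i, hi⟩ := hn
    exact Or.inl <| not_isBounded_of_tendsto_cobounded (tendsto_rpow_cobounded hi)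
      (IsNewtonVertex.eventually_mem_positivitySet hvert hp hppos)
  · push Not at hn
    obtain ⟨m, hm, hvertm⟩ := IsNewtonVertex.exists_forall_neg hvert hn
    exact Or.inr <| mem_closure_of_tendsto (tendsto_rpow_nhds_zero hm)
      (hvertm.eventually_mem_positivitySet hp hppos)

/-- If some p in the positive frame of f is a vertex of the Newton
polytope w.r.t. n, then Π(f) = {r ∈ (0,∞)^d : f(r) > 0} is unbounded or its closure
contains the origin. -/
theorem subtropical_necessary_condition {d : ℕ}
    (F : Finset (Fin d → ℕ)) (coef : (Fin d → ℕ) → ℝ)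
    (hcoef : ∀ q ∈ F, coef q ≠ 0)
    (p : Fin d → ℕ) (hp : p ∈ F) (hppos : 0 < coef p) (n : Fin d → ℝ)
    (hvert : ∀ q ∈ F, q ≠ p →
      ∑ i, n i * (p i : ℝ) > ∑ i, n i * (q i : ℝ)) :
    ¬ Bornology.IsBounded
        {x : Fin d → ℝ | (∀ i, 0 < x i) ∧ 0 < ∑ q ∈ F, coef q * ∏ i, x i ^ q i} ∨
    (0 : Fin d → ℝ) ∈ closure
        {x : Fin d → ℝ | (∀ i, 0 < x i) ∧ 0 < ∑ q ∈ F, coef q * ∏ i, x i ^ q i} :=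
  subtropical_necessary_condition_general F coef p hp hppos n hvert
end
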